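/- arXiv:1502.01072 — 10 statements merged into one kernel-verified Lean document; each statement's English description precedes it below -/
import Mathlib

section
/- If an algebra A has ternary operations P_1,...,P_n satisfying the Pixley chain equations (P_1(x,y,y)=x, P_n(x,x,y)=y, P_i(x,y,x)=x for all i, and P_i(x,x,y)=P_{i+1}(x,y,y) for i<n), then A has ternary operations satisfying the Jónsson chain equations J(n). -/
/-- A Pixley chain P(n) yields a Jónsson chain J(n). -/
theorem pixley_implies_jonsson {A : Type*} (n : ℕ) (hn : 1 ≤ n)
    (P : ℕ → A → A → A → A)
    (hP1 : ∀ x y : A, P 1 x y y = x)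
    (hPn : ∀ x y : A, P n x x y = y)
    (hPmaj : ∀ i, 1 ≤ i → i ≤ n → ∀ x y : A, P i x y x = x)
    (hPlink : ∀ i, 1 ≤ i → i < n → ∀ x y : A, P i x x y = P (i + 1) x y y) :
    ∃ J : ℕ → A → A → A → A,
      (∀ x y : A, J 1 x x y = x) ∧
      (∀ x y : A, J (2 * n + 1) x y y = y) ∧
      (∀ i, 1 ≤ i → i ≤ 2 * n + 1 → ∀ x y : A, J i x y x = x) ∧
      (∀ i : ℕ, i ≤ n - 1 →
        ∀ x y : A, J (2 * i + 1) x y y = J (2 * i + 2) x y y) ∧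
      (∀ i : ℕ, 1 ≤ i → i ≤ n →
        ∀ x y : A, J (2 * i) x x y = J (2 * i + 1) x x y) := by
  refine ⟨fun i x y z =>
      if i = 2 * n + 1 then z
      else if i % 2 = 0 then P (i / 2) x y z else P (i / 2 + 1) x z z,
    ?_, ?_, ?_, ?_, ?_⟩
  · intro x y
    have h1 : ¬ (1 = 2 * n + 1) := by omega
    simp only [h1, if_false]
    norm_num [hP1]
  · intro x y; simp
  · intro i hi1 hi2 x y
    by_cases h : i = 2 * n + 1
    · simp [h]
    · simp only [h, if_false]
      by_cases he : i % 2 = 0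
      · simp only [he, if_true]
        exact hPmaj (i / 2) (by omega) (by omega) x y
      · simp only [he, if_false]
        exact hPmaj (i / 2 + 1) (by omega) (by omega) x x
  · intro i hi x y
    have h1 : ¬ (2 * i + 1 = 2 * n + 1) := by omega
    have h2 : ¬ (2 * i + 2 = 2 * n + 1) := by omega
    have h3 : (2 * i + 1) % 2 ≠ 0 := by omega
    have h4 : (2 * i + 2) % 2 = 0 := by omega
    have h5 : (2 * i + 1) / 2 + 1 = (2 * i + 2) / 2 := by omega
    simp only [h1, h2, h3, h4, if_false, if_true, h5]
  · intro i hi1 hi2 x y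
    have h2 : ¬ (2 * i = 2 * n + 1) := by omega
    have h4 : (2 * i) % 2 = 0 := by omega
    have h6 : (2 * i) / 2 = i := by omega
    by_cases h1 : 2 * i + 1 = 2 * n + 1
    · have : i = n := by omega
      subst this
      simp only [h1, h2, h4, if_false, if_true, h6, if_pos rfl]
      exact hPn x y
    · have h3 : (2 * i + 1) % 2 ≠ 0 := by omega
      have h5 : (2 * i + 1) / 2 + 1 = i + 1 := by omega
      simp only [h1, h2, h3, h4, if_false, if_true, h5, h6]
      exact hPlink i hi1 (by omega) x y
end

section
/- Let A be a finite algebra with ternary idempotent operations J_1,...,J_{2n+1} forming a chain of weak Jónsson operations, and let E ⊆ F be reflexive transitive compatible binary relations (admissible preorders) on A. If E middle-absorbs F with respect to each J_i (meaning: whenever (a,a'),(c,c') ∈ E and (b,b') ∈ F, then (J_i(a,b,c), J_i(a',b',c')) ∈ E), then E = F. -/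
namespace JonssonAbsorptionAux

universe u

/-- Closure of a set under the (in-range) ternary operations `J i`. -/
inductive Clo {A : Type u} (n : ℕ) (J : ℕ → A → A → A → A) (s : Set A) : A → Prop
  | base {x : A} (hx : x ∈ s) : Clo n J s x
  | op (i : ℕ) (h1 : 1 ≤ i) (h2 : i ≤ 2 * n + 1) (x y z : A)
      (hx : Clo n J s x) (hy : Clo n J s y) (hz : Clo n J s z) : Clo n J s (J i x y z)

/-- On a finite preorder, a monotone map `f` with `E x (f x)` has an "eventually
fixed" point above `x`. -/
lemma exists_fix {A : Type u} [Fintype A] (E : A → A → Prop)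
    (hErefl : ∀ a, E a a) (hEtrans : Transitive E)
    (f : A → A) (hmono : ∀ u v, E u v → E (f u) (f v))
    (P : A → Prop) (x : A) (hx : E x (f x)) (hPx : P x) (hPf : ∀ v, P v → P (f v)) :
    ∃ y, P y ∧ E x y ∧ E y (f y) ∧ E (f y) y := by
  have chainy : ∀ m : ℕ, E (f^[m] x) (f^[m + 1] x) := by
    intro m
    induction m with
    | zero => simpa using hx
    | succ m ih =>
      rw [Function.iterate_succ_apply' f m x, Function.iterate_succ_apply' f (m + 1) x]
      exact hmono _ _ ih
  have chainle : ∀ m l : ℕ, m ≤ l → E (f^[m] x) (f^[l] x) := by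
    intro m l hml
    induction l, hml using Nat.le_induction with
    | base => exact hErefl _
    | succ l _ ih => exact hEtrans ih (chainy l)
  have hPall : ∀ m : ℕ, P (f^[m] x) := by
    intro m
    induction m with
    | zero => simpa using hPx
    | succ m ih =>
      rw [Function.iterate_succ_apply' f m x]
      exact hPf _ ih
  have key : ∀ k l : ℕ, k < l → f^[k] x = f^[l] x →
      ∃ y, P y ∧ E x y ∧ E y (f y) ∧ E (f y) y := by
    intro k l hkl heq
    refine ⟨f^[k] x, hPall k, chainle 0 k (Nat.zero_le k), ?_, ?_⟩
    · have h := chainy k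
      rwa [Function.iterate_succ_apply' f k x] at h
    · have h1 : E (f^[k + 1] x) (f^[l] x) := chainle (k + 1) l hkl
      rw [← heq, Function.iterate_succ_apply' f k x] at h1
      exact h1
  obtain ⟨k, l, hne, heq⟩ := Finite.exists_ne_map_eq_of_infinite (fun m => f^[m] x)
  rcases hne.lt_or_gt with h | h
  · exact key k l h heq
  · exact key l k h heq.symm

/-- If `F u v` and `F v u`, then `E u v` (zig-zag using middle absorption). -/
lemma swap {A : Type u} (n : ℕ) (J : ℕ → A → A → A → A)
    (hJ1 : ∀ x y : A, J 1 x x y = x)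
    (hJtop : ∀ x y : A, J (2 * n + 1) x y y = y)
    (hJodd : ∀ i : ℕ, i ≤ n - 1 →
      ∀ x y : A, J (2 * i + 1) x y y = J (2 * i + 2) x y y)
    (hJeven : ∀ i : ℕ, 1 ≤ i → i ≤ n →
      ∀ x y : A, J (2 * i) x x y = J (2 * i + 1) x x y)
    (E F : A → A → Prop)
    (hErefl : ∀ a, E a a) (hEtrans : Transitive E)
    (habs : ∀ i, 1 ≤ i → i ≤ 2 * n + 1 → ∀ a₁ b₁ a₂ b₂ a₃ b₃ : A,
      E a₁ b₁ → F a₂ b₂ → E a₃ b₃ → E (J i a₁ a₂ a₃) (J i b₁ b₂ b₃))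
    (u v : A) (huv : F u v) (hvu : F v u) : E u v := by
  have key : ∀ i : ℕ, i ≤ n → E u (J (2 * i + 1) u v v) := by
    intro i
    induction i with
    | zero =>
      intro _
      have h := habs 1 (by omega) (by omega) u u u v v v (hErefl u) huv (hErefl v)
      rw [hJ1] at h
      exact h
    | succ i ih =>
      intro hin
      show E u (J (2 * i + 3) u v v)
      have h1 : E u (J (2 * i + 1) u v v) := ih (by omega)
      have e1 : J (2 * i + 1) u v v = J (2 * i + 2) u v v := hJodd i (by omega) u v
      rw [e1] at h1
      have h2 : E (J (2 * i + 2) u v v) (J (2 * i + 2) u u v) :=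
        habs (2 * i + 2) (by omega) (by omega) u u v u v v (hErefl u) hvu (hErefl v)
      have e2 : J (2 * i + 2) u u v = J (2 * i + 3) u u v := hJeven (i + 1) (by omega) hin u v
      rw [e2] at h2
      have h3 : E (J (2 * i + 3) u u v) (J (2 * i + 3) u v v) :=
        habs (2 * i + 3) (by omega) (by omega) u u u v v v (hErefl u) huv (hErefl v)
      exact hEtrans (hEtrans h1 h2) h3
  have h := key n le_rfl
  rwa [hJtop] at h

/-- Main auxiliary statement, proved by induction on the cardinality bound. -/
theorem aux : ∀ (N : ℕ) (A : Type u) [Fintype A] (n : ℕ) (J : ℕ → A → A → A → A),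
    (∀ i, 1 ≤ i → i ≤ 2 * n + 1 → ∀ x : A, J i x x x = x) →
    (∀ x y : A, J 1 x x y = x) →
    (∀ x y : A, J (2 * n + 1) x y y = y) →
    (∀ i : ℕ, i ≤ n - 1 → ∀ x y : A, J (2 * i + 1) x y y = J (2 * i + 2) x y y) →
    (∀ i : ℕ, 1 ≤ i → i ≤ n → ∀ x y : A, J (2 * i) x x y = J (2 * i + 1) x x y) →
    ∀ (E F : A → A → Prop),
    (∀ a, E a a) → Transitive E → (∀ a, F a a) → Transitive F →
    (∀ a b, E a b → F a b) →
    (∀ i, 1 ≤ i → i ≤ 2 * n + 1 → ∀ a₁ b₁ a₂ b₂ a₃ b₃ : A,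
      E a₁ b₁ → E a₂ b₂ → E a₃ b₃ → E (J i a₁ a₂ a₃) (J i b₁ b₂ b₃)) →
    (∀ i, 1 ≤ i → i ≤ 2 * n + 1 → ∀ a₁ b₁ a₂ b₂ a₃ b₃ : A,
      F a₁ b₁ → F a₂ b₂ → F a₃ b₃ → F (J i a₁ a₂ a₃) (J i b₁ b₂ b₃)) →
    (∀ i, 1 ≤ i → i ≤ 2 * n + 1 → ∀ a₁ b₁ a₂ b₂ a₃ b₃ : A,
      E a₁ b₁ → F a₂ b₂ → E a₃ b₃ → E (J i a₁ a₂ a₃) (J i b₁ b₂ b₃)) →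
    Fintype.card A ≤ N → ∀ a b : A, F a b → E a b := by
  intro N
  induction N with
  | zero =>
    intro A _ n J _ _ _ _ _ E F _ _ _ _ _ _ _ _ hcard a b _
    have h0 : 0 < Fintype.card A := Fintype.card_pos_iff.mpr ⟨a⟩
    exact absurd h0 (by omega)
  | succ N ihN =>
    intro A instA n J hidem hJ1 hJtop hJodd hJeven E F hErefl hEtrans hFrefl hFtrans hEF
      hEcomp hFcomp habs hcard a b hab
    rcases Nat.eq_zero_or_pos n with hn | hn
    · subst hn
      have h := habs 1 (by omega) (by omega) a a a b b b (hErefl a) hab (hErefl b)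
      rw [hJ1] at h
      have h2 : J 1 a b b = b := hJtop a b
      rwa [h2] at h
    · -- main climb along the chain
      have main : ∀ k : ℕ, k ≤ n →
          (E a b ∨ ∃ x, E a x ∧ F x b ∧
            E x (J (2 * k + 1) x b b) ∧ E (J (2 * k + 1) x b b) x) := by
        intro k
        induction k with
        | zero =>
          intro _
          right
          have hmono : ∀ u v, E u v → E (J 1 u b b) (J 1 v b b) := fun u v huv =>
            hEcomp 1 (by omega) (by omega) u v b b b b huv (hErefl b) (hErefl b)
          have hstart : E a (J 1 a b b) := by
            have h := habs 1 (by omega) (by omega) a a a b b b (hErefl a) hab (hErefl b)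
            rwa [hJ1] at h
          have hP : ∀ v, F v b → F (J 1 v b b) b := by
            intro v hv
            have h := hFcomp 1 (by omega) (by omega) v b b b b b hv (hFrefl b) (hFrefl b)
            rwa [hidem 1 (by omega) (by omega) b] at h
          obtain ⟨y, hy1, hy2, hy3, hy4⟩ :=
            exists_fix E hErefl hEtrans (fun x => J 1 x b b) hmono (fun v => F v b) a
              hstart hab hP
          exact ⟨y, hy2, hy1, hy3, hy4⟩
        | succ k ihk =>
          intro hk1
          rcases ihk (by omega) with hdone | ⟨x', h1, h2, h3, h4⟩
          · exact Or.inl hdone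
          · have e1 : J (2 * k + 1) x' b b = J (2 * k + 2) x' b b := hJodd k (by omega) x' b
            have hpq : E (J (2 * k + 2) x' x' b) (J (2 * k + 2) x' b b) :=
              habs (2 * k + 2) (by omega) (by omega) x' x' x' b b b (hErefl x') h2 (hErefl b)
            have hpx : E (J (2 * k + 2) x' x' b) x' := hEtrans hpq (e1 ▸ h4)
            have hxp : F x' (J (2 * k + 2) x' x' b) := by
              have h := hFcomp (2 * k + 2) (by omega) (by omega) x' x' x' x' x' b
                (hFrefl x') (hFrefl x') h2
              rwa [hidem (2 * k + 2) (by omega) (by omega) x'] at h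
            set S : Set A := {J (2 * k + 2) x' x' b, x'} with hS
            have hpS : J (2 * k + 2) x' x' b ∈ S := by rw [hS]; exact Set.mem_insert _ _
            have hx'S : x' ∈ S := by rw [hS]; simp
            by_cases hbB : Clo n J S b
            · -- b is in the closure: everything in the closure is E-below x'
              have hall : ∀ v, Clo n J S v → E v x' := by
                intro v hv
                induction hv with
                | base hx =>
                  rw [hS] at hx
                  simp only [Set.mem_insert_iff, Set.mem_singleton_iff] at hx
                  rcases hx with rfl | rfl
                  · exact hpx
                  · exact hErefl _
                | op i hi1 hi2 x y z hx hy hz ihx ihy ihz =>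
                  have h := hEcomp i hi1 hi2 x x' y x' z x' ihx ihy ihz
                  rwa [hidem i hi1 hi2 x'] at h
              have hbx' : E b x' := hall b hbB
              have hx'b : E x' b :=
                swap n J hJ1 hJtop hJodd hJeven E F hErefl hEtrans habs x' b h2
                  (hEF b x' hbx')
              exact Or.inl (hEtrans h1 hx'b)
            · -- the closure is a proper subalgebra: use the cardinality IH
              haveI : DecidablePred (Clo n J S) := Classical.decPred _
              have hlt : Fintype.card {v // Clo n J S v} < Fintype.card A :=
                Fintype.card_subtype_lt (p := fun v => Clo n J S v) hbB
              have hcard2 : Fintype.card {v // Clo n J S v} ≤ N := by omega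
              have hsub : ∀ u v : {v // Clo n J S v}, F u.1 v.1 → E u.1 v.1 := by
                intro u v huv
                refine ihN {v // Clo n J S v} n
                  (fun i x y z => if h : 1 ≤ i ∧ i ≤ 2 * n + 1
                    then ⟨J i x.1 y.1 z.1, Clo.op i h.1 h.2 x.1 y.1 z.1 x.2 y.2 z.2⟩ else x)
                  ?_ ?_ ?_ ?_ ?_ (fun u v => E u.1 v.1) (fun u v => F u.1 v.1)
                  ?_ ?_ ?_ ?_ ?_ ?_ ?_ ?_ hcard2 u v huv
                · intro i hi1 hi2 x
                  simp only [dif_pos (show 1 ≤ i ∧ i ≤ 2 * n + 1 from ⟨hi1, hi2⟩)]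
                  exact Subtype.ext (hidem i hi1 hi2 x.1)
                · intro x y
                  simp only [dif_pos (show 1 ≤ 1 ∧ 1 ≤ 2 * n + 1 by omega)]
                  exact Subtype.ext (hJ1 x.1 y.1)
                · intro x y
                  simp only [dif_pos (show 1 ≤ 2 * n + 1 ∧ 2 * n + 1 ≤ 2 * n + 1 by omega)]
                  exact Subtype.ext (hJtop x.1 y.1)
                · intro i hi x y
                  simp only [dif_pos (show 1 ≤ 2 * i + 1 ∧ 2 * i + 1 ≤ 2 * n + 1 by omega),
                    dif_pos (show 1 ≤ 2 * i + 2 ∧ 2 * i + 2 ≤ 2 * n + 1 by omega)]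
                  exact Subtype.ext (hJodd i hi x.1 y.1)
                · intro i hi1 hi2 x y
                  simp only [dif_pos (show 1 ≤ 2 * i ∧ 2 * i ≤ 2 * n + 1 by omega),
                    dif_pos (show 1 ≤ 2 * i + 1 ∧ 2 * i + 1 ≤ 2 * n + 1 by omega)]
                  exact Subtype.ext (hJeven i hi1 hi2 x.1 y.1)
                · exact fun u => hErefl u.1
                · exact fun u v w h h' => hEtrans h h'
                · exact fun u => hFrefl u.1
                · exact fun u v w h h' => hFtrans h h'
                · exact fun u v h => hEF u.1 v.1 h
                · intro i hi1 hi2 a₁ b₁ a₂ b₂ a₃ b₃ g1 g2 g3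
                  simp only [dif_pos (show 1 ≤ i ∧ i ≤ 2 * n + 1 from ⟨hi1, hi2⟩)]
                  exact hEcomp i hi1 hi2 _ _ _ _ _ _ g1 g2 g3
                · intro i hi1 hi2 a₁ b₁ a₂ b₂ a₃ b₃ g1 g2 g3
                  simp only [dif_pos (show 1 ≤ i ∧ i ≤ 2 * n + 1 from ⟨hi1, hi2⟩)]
                  exact hFcomp i hi1 hi2 _ _ _ _ _ _ g1 g2 g3
                · intro i hi1 hi2 a₁ b₁ a₂ b₂ a₃ b₃ g1 g2 g3
                  simp only [dif_pos (show 1 ≤ i ∧ i ≤ 2 * n + 1 from ⟨hi1, hi2⟩)]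
                  exact habs i hi1 hi2 _ _ _ _ _ _ g1 g2 g3
              have hFx'v : ∀ v, Clo n J S v → F x' v := by
                intro v hv
                induction hv with
                | base hx =>
                  rw [hS] at hx
                  simp only [Set.mem_insert_iff, Set.mem_singleton_iff] at hx
                  rcases hx with rfl | rfl
                  · exact hxp
                  · exact hFrefl _
                | op i hi1 hi2 x y z hx hy hz ihx ihy ihz =>
                  have h := hFcomp i hi1 hi2 x' x x' y x' z ihx ihy ihz
                  rwa [hidem i hi1 hi2 x'] at h
              have hx'p : E x' (J (2 * k + 2) x' x' b) :=
                hsub ⟨x', Clo.base hx'S⟩ ⟨J (2 * k + 2) x' x' b, Clo.base hpS⟩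
                  (hFx'v _ (Clo.base hpS))
              -- now J (2k+2) x' x' b ≡ x'; shift with hJeven and stabilize at level 2k+3
              have e2 : J (2 * k + 2) x' x' b = J (2 * k + 3) x' x' b :=
                hJeven (k + 1) (by omega) hk1 x' b
              have h5 : E (J (2 * k + 3) x' x' b) (J (2 * k + 3) x' b b) :=
                habs (2 * k + 3) (by omega) (by omega) x' x' x' b b b (hErefl x') h2 (hErefl b)
              have hstart : E x' (J (2 * k + 3) x' b b) := hEtrans (e2 ▸ hx'p) h5
              have hmono : ∀ u v, E u v → E (J (2 * k + 3) u b b) (J (2 * k + 3) v b b) :=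
                fun u v huv =>
                  hEcomp (2 * k + 3) (by omega) (by omega) u v b b b b huv (hErefl b) (hErefl b)
              have hP : ∀ v, F v b → F (J (2 * k + 3) v b b) b := by
                intro v hv
                have h := hFcomp (2 * k + 3) (by omega) (by omega) v b b b b b hv
                  (hFrefl b) (hFrefl b)
                rwa [hidem (2 * k + 3) (by omega) (by omega) b] at h
              obtain ⟨y, hy1, hy2, hy3, hy4⟩ :=
                exists_fix E hErefl hEtrans (fun x => J (2 * k + 3) x b b) hmono
                  (fun v => F v b) x' hstart h2 hP
              exact Or.inr ⟨y, hEtrans h1 hy2, hy1, hy3, hy4⟩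
      rcases main n le_rfl with hdone | ⟨x, hax, hxb, hfix1, _⟩
      · exact hdone
      · have hb : J (2 * n + 1) x b b = b := hJtop x b
        rw [hb] at hfix1
        exact hEtrans hax hfix1

end JonssonAbsorptionAux

/-- On a finite algebra with weak Jónsson operations, if an admissible preorder E
    middle-absorbs an admissible preorder F with E ⊆ F, then E = F. -/
theorem jonsson_absorption_preorders_finite {A : Type*} [Fintype A] (n : ℕ)
    (J : ℕ → A → A → A → A)
    (hidem : ∀ i, 1 ≤ i → i ≤ 2 * n + 1 → ∀ x : A, J i x x x = x)
    (hJ1 : ∀ x y : A, J 1 x x y = x)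
    (hJtop : ∀ x y : A, J (2 * n + 1) x y y = y)
    (hJodd : ∀ i : ℕ, i ≤ n - 1 →
      ∀ x y : A, J (2 * i + 1) x y y = J (2 * i + 2) x y y)
    (hJeven : ∀ i : ℕ, 1 ≤ i → i ≤ n →
      ∀ x y : A, J (2 * i) x x y = J (2 * i + 1) x x y)
    (E F : A → A → Prop)
    (hErefl : ∀ a, E a a) (hEtrans : Transitive E)
    (hFrefl : ∀ a, F a a) (hFtrans : Transitive F)
    (hEF : ∀ a b, E a b → F a b)
    (hEcomp : ∀ i, 1 ≤ i → i ≤ 2 * n + 1 → ∀ a₁ b₁ a₂ b₂ a₃ b₃ : A,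
      E a₁ b₁ → E a₂ b₂ → E a₃ b₃ → E (J i a₁ a₂ a₃) (J i b₁ b₂ b₃))
    (hFcomp : ∀ i, 1 ≤ i → i ≤ 2 * n + 1 → ∀ a₁ b₁ a₂ b₂ a₃ b₃ : A,
      F a₁ b₁ → F a₂ b₂ → F a₃ b₃ → F (J i a₁ a₂ a₃) (J i b₁ b₂ b₃))
    (habs : ∀ i, 1 ≤ i → i ≤ 2 * n + 1 → ∀ a₁ b₁ a₂ b₂ a₃ b₃ : A,
      E a₁ b₁ → F a₂ b₂ → E a₃ b₃ → E (J i a₁ a₂ a₃) (J i b₁ b₂ b₃)) :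
    ∀ a b, E a b ↔ F a b := by
  intro a b
  constructor
  · exact hEF a b
  · intro h
    exact JonssonAbsorptionAux.aux (Fintype.card A) A n J hidem hJ1 hJtop hJodd hJeven
      E F hErefl hEtrans hFrefl hFtrans hEF hEcomp hFcomp habs le_rfl a b h
end

section
/- Let A be an algebra with idempotent ternary operations D_1,...,D_m forming a chain of weak directed Jónsson operations, and let E ⊆ F be binary relations on A such that E middle-absorbs F with respect to each D_i. Then for every (a,b) ∈ F, the pair (a,b) belongs to the transitive closure of E. Consequently, if E and F are admissible preorders with E ⊆ F and E middle-absorbs F with respect to a directed Jónsson chain, then E = F. -/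
/-- Weak directed Jónsson absorption: every F-pair is in the transitive closure
    of E; consequently admissible preorders with directed Jónsson absorption
    coincide. -/
theorem directed_jonsson_absorption {A : Type*} (m : ℕ) (hm : 1 ≤ m)
    (D : ℕ → A → A → A → A)
    (hidem : ∀ i, 1 ≤ i → i ≤ m → ∀ x : A, D i x x x = x)
    (hD1 : ∀ x y : A, D 1 x x y = x)
    (hDm : ∀ x y : A, D m x y y = y)
    (hDlink : ∀ i, 1 ≤ i → i < m → ∀ x y : A, D i x y y = D (i + 1) x x y)
    (E F : A → A → Prop)
    (hErefl : ∀ a, E a a) (hFrefl : ∀ a, F a a)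
    (hEF : ∀ a b, E a b → F a b)
    (habs : ∀ i, 1 ≤ i → i ≤ m → ∀ a₁ b₁ a₂ b₂ a₃ b₃ : A,
      E a₁ b₁ → F a₂ b₂ → E a₃ b₃ → E (D i a₁ a₂ a₃) (D i b₁ b₂ b₃)) :
    (∀ a b, F a b → Relation.TransGen E a b) ∧
    (Transitive E → ∀ a b, E a b ↔ F a b) := by

  have key : ∀ a b, F a b → Relation.TransGen E a b := by
    intro a b hab
    have step : ∀ i, 1 ≤ i → i ≤ m → E (D i a a b) (D i a b b) := fun i h1 h2 =>
      habs i h1 h2 a a a b b b (hErefl a) hab (hErefl b)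
    have main : ∀ i, 1 ≤ i → i ≤ m → Relation.TransGen E a (D i a b b) := by
      intro i h1 h2
      induction i with
      | zero => omega
      | succ n ih =>
        rcases Nat.eq_or_lt_of_le h1 with h | h
        · refine Relation.TransGen.single ?_
          have hs := step 1 le_rfl (by omega)
          rw [hD1 a b] at hs
          rw [← h]
          exact hs
        · have hn1 : 1 ≤ n := by omega
          have hnm : n ≤ m := by omega
          have := ih hn1 hnm
          have hlink := hDlink n hn1 (by omega) a b
          have := this.tail (by rw [hlink]; exact step (n+1) (by omega) h2)
          exact this
    have := main m hm le_rfl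
    rwa [hDm a b] at this
  refine ⟨key, fun hT a b => ⟨hEF a b, fun hF => ?_⟩⟩
  have h := key a b hF
  clear hF
  induction h with
  | single h => exact h
  | tail _ h ih => exact hT ih h
end

section
/- Let A be an algebra with operations H_1,...,H_k satisfying the Hagemann–Mitschke equations, and let E be a reflexive binary relation on A compatible with each H_i. Then E^{k+1} = E^k, where E^j denotes the j-fold relational composition of E with itself; consequently E^k is the transitive closure of E. -/
/-- `relPow E j` is the `j`-fold relational composition of `E` with itself
    (`relPow E 0` is equality). -/
def relPow {A : Type*} (E : A → A → Prop) : ℕ → A → A → Prop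
  | 0 => fun a b => a = b
  | j + 1 => fun a c => ∃ b, relPow E j a b ∧ E b c

lemma relPow_iff_chain {A : Type*} (E : A → A → Prop) (n : ℕ) (a b : A) :
    relPow E n a b ↔ ∃ f : ℕ → A, f 0 = a ∧ f n = b ∧ ∀ i < n, E (f i) (f (i + 1)) := by
  induction n generalizing b with
  | zero =>
    constructor
    · rintro rfl; exact ⟨fun _ => a, rfl, rfl, by omega⟩
    · rintro ⟨f, h0, hn, _⟩; rw [relPow]; rw [← h0, ← hn]
  | succ n ih =>
    constructor
    · rintro ⟨c, hac, hcb⟩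
      obtain ⟨f, h0, hn, hs⟩ := (ih c).mp hac
      refine ⟨fun i => if i = n + 1 then b else f i, by simpa using h0, by simp, ?_⟩
      intro i hi
      show E (if i = n + 1 then b else f i) (if i + 1 = n + 1 then b else f (i + 1))
      rcases Nat.lt_or_ge i n with h | h
      · rw [if_neg (by omega), if_neg (by omega)]
        exact hs i h
      · have hin : i = n := by omega
        rw [if_neg (by omega), if_pos (by omega), hin, hn]
        exact hcb
    · rintro ⟨f, h0, hn, hs⟩
      exact ⟨f n, (ih (f n)).mpr ⟨f, h0, rfl, fun i hi => hs i (by omega)⟩, hn ▸ hs n (by omega)⟩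

lemma relPow_succ_of {A : Type*} (E : A → A → Prop) (hErefl : ∀ a, E a a) (n : ℕ) (a b : A)
    (h : relPow E n a b) : relPow E (n + 1) a b := ⟨b, h, hErefl b⟩

/-- With Hagemann–Mitschke operations, for a reflexive compatible relation E we
    have E^{k+1} = E^k, and hence E^k is the transitive closure of E. -/
theorem hagemann_mitschke_pow_stabilizes {A : Type*} (k : ℕ) (hk : 1 ≤ k)
    (H : ℕ → A → A → A → A)
    (hH1 : ∀ x z : A, H 1 x z z = x)
    (hHk : ∀ x z : A, H k x x z = z)
    (hHlink : ∀ i, 1 ≤ i → i < k → ∀ x z : A, H i x x z = H (i + 1) x z z)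
    (E : A → A → Prop)
    (hErefl : ∀ a, E a a)
    (hEcomp : ∀ i, 1 ≤ i → i ≤ k → ∀ a₁ b₁ a₂ b₂ a₃ b₃ : A,
      E a₁ b₁ → E a₂ b₂ → E a₃ b₃ → E (H i a₁ a₂ a₃) (H i b₁ b₂ b₃)) :
    (∀ a b : A, relPow E (k + 1) a b ↔ relPow E k a b) ∧
    (∀ a b : A, Relation.TransGen E a b ↔ relPow E k a b) := by
  -- key step: E^{k+1} ⊆ E^k
  have key : ∀ a b : A, relPow E (k + 1) a b → relPow E k a b := by
    intro a b h
    obtain ⟨f, h0, hn, hs⟩ := (relPow_iff_chain E (k + 1) a b).mp h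
    refine (relPow_iff_chain E k a b).mpr
      ⟨fun i => if i < k then H (i + 1) (f i) (f (i + 1)) (f (i + 1)) else b, ?_, ?_, ?_⟩
    · simp only [if_pos (by omega : 0 < k)]
      rw [hH1, h0]
    · simp
    · intro i hi
      simp only [if_pos hi]
      rcases Nat.lt_or_ge (i + 1) k with hlt | hge
      · simp only [if_pos hlt]
        rw [← hHlink (i + 1) (by omega) hlt]
        exact hEcomp (i + 1) (by omega) (by omega) _ _ _ _ _ _
          (hs i (by omega)) (hErefl _) (hs (i + 1) (by omega))
      · have hik : i + 1 = k := by omega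
        simp only [if_neg (by omega : ¬ i + 1 < k)]
        have hb : b = f (i + 2) := by rw [← hn]; congr 1; omega
        rw [hb, ← hHk (f (i + 1)) (f (i + 2)), ← hik]
        exact hEcomp (i + 1) (by omega) (by omega) _ _ _ _ _ _
          (hs i (by omega)) (hErefl _) (hs (i + 1) (by omega))
  -- E^{k+t} ⊆ E^k
  have reduce : ∀ t a b, relPow E (k + t) a b → relPow E k a b := by
    intro t
    induction t with
    | zero => intro a b h; exact h
    | succ t ih =>
      rintro a b ⟨c, hac, hcb⟩
      exact key a b ⟨c, ih a c hac, hcb⟩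
  -- E^j ⊆ E^k for j ≤ k
  have pad' : ∀ j t a b, relPow E j a b → relPow E (j + t) a b := by
    intro j t
    induction t with
    | zero => intro a b h; exact h
    | succ t ih => intro a b h; exact relPow_succ_of E hErefl _ a b (ih a b h)
  have pad : ∀ j, j ≤ k → ∀ a b, relPow E j a b → relPow E k a b := by
    intro j hj a b h
    have := pad' j (k - j) a b h
    rwa [show j + (k - j) = k by omega] at this
  refine ⟨fun a b => ⟨key a b, relPow_succ_of E hErefl k a b⟩, fun a b => ⟨?_, ?_⟩⟩
  · intro h
    induction h with
    | single hab => exact pad 1 hk _ _ ⟨_, rfl, hab⟩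
    | tail _ hcb ih => exact key _ _ ⟨_, ih, hcb⟩
  · intro h
    have : ∀ n, 1 ≤ n → ∀ a b, relPow E n a b → Relation.TransGen E a b := by
      intro n hn
      induction n with
      | zero => omega
      | succ m ih =>
        rintro a b ⟨c, hac, hcb⟩
        rcases Nat.eq_zero_or_pos m with rfl | hm
        · rw [show c = a from hac.symm] at hcb
          exact Relation.TransGen.single hcb
        · exact (ih hm a c hac).tail hcb
    exact this k hk a b h
end

section
/- Let A be an algebra with Hagemann–Mitschke operations H_1,...,H_k and let E be a reflexive binary relation compatible with each H_i. If (x,z) belongs to the transitive closure of E, then (z,x) also belongs to the transitive closure of E (the transitive closure of a reflexive compatible relation in a (k+1)-permutable algebra is symmetric). -/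
/-- With Hagemann–Mitschke operations, the transitive closure of a reflexive
    compatible relation is symmetric. -/
theorem hagemann_mitschke_transGen_symm {A : Type*} (k : ℕ) (hk : 1 ≤ k)
    (H : ℕ → A → A → A → A)
    (hH1 : ∀ x z : A, H 1 x z z = x)
    (hHk : ∀ x z : A, H k x x z = z)
    (hHlink : ∀ i, 1 ≤ i → i < k → ∀ x z : A, H i x x z = H (i + 1) x z z)
    (E : A → A → Prop)
    (hErefl : ∀ a, E a a)
    (hEcomp : ∀ i, 1 ≤ i → i ≤ k → ∀ a₁ b₁ a₂ b₂ a₃ b₃ : A,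
      E a₁ b₁ → E a₂ b₂ → E a₃ b₃ → E (H i a₁ a₂ a₃) (H i b₁ b₂ b₃)) :
    ∀ x z : A, Relation.TransGen E x z → Relation.TransGen E z x := by
  intro x z hxz
  -- compatibility of TransGen in the middle argument
  have mid : ∀ i, 1 ≤ i → i ≤ k → ∀ a b : A,
      Relation.TransGen E (H i a x b) (H i a z b) := by
    intro i h1 h2 a b
    induction hxz with
    | single h => exact Relation.TransGen.single (hEcomp i h1 h2 a a _ _ b b (hErefl a) h (hErefl b))
    | tail _ h ih => exact ih.tail (hEcomp i h1 h2 a a _ _ b b (hErefl a) h (hErefl b))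
  -- chain: z = H 1 z x x → H 1 z z x = H 2 z x x → ... → H k z z x = x
  have key : ∀ i, 1 ≤ i → i ≤ k → Relation.TransGen E z (H i z z x) := by
    intro i h1
    induction i with
    | zero => omega
    | succ n ih =>
      intro h2
      rcases Nat.eq_or_lt_of_le h1 with h | h
      · -- n + 1 = 1
        have : n = 0 := by omega
        subst this
        have := mid 1 le_rfl h2 z x
        rwa [hH1] at this
      · have hn1 : 1 ≤ n := by omega
        have hnk : n < k := by omega
        have h3 := ih hn1 (le_of_lt hnk)
        rw [hHlink n hn1 hnk] at h3
        exact h3.trans (mid (n + 1) h1 h2 z x)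
  have := key k hk le_rfl
  rwa [hHk] at this
end

section
/- Let A be an algebra with idempotent ternary weak Gumm operations D_1,...,D_m,Q in directed form, let E and F be reflexive binary relations on A compatible with all operations, with E middle-absorbing F with respect to D_1,...,D_m. Then for every (a,b) ∈ F there exists c ∈ A with (b,c) ∈ F and (a,c) in the transitive closure of E. -/
/-- Gumm absorption theorem: if E middle-absorbs F with respect to a weak
    directed Gumm chain, then every F-pair (a,b) admits c with (b,c) ∈ F and
    (a,c) in the transitive closure of E. -/
theorem gumm_absorption {A : Type*} (m : ℕ) (hm : 1 ≤ m)
    (D : ℕ → A → A → A → A) (Q : A → A → A → A)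
    (hidem : ∀ i, 1 ≤ i → i ≤ m → ∀ x : A, D i x x x = x)
    (hQidem : ∀ x : A, Q x x x = x)
    (hD1 : ∀ x y : A, D 1 x x y = x)
    (hDm : ∀ x y : A, D m x y y = Q x y y)
    (hQ : ∀ x y : A, Q x x y = y)
    (hDlink : ∀ i, 1 ≤ i → i < m → ∀ x y : A, D i x y y = D (i + 1) x x y)
    (E F : A → A → Prop)
    (hErefl : ∀ a, E a a) (hFrefl : ∀ a, F a a)
    (hFcompQ : ∀ a₁ b₁ a₂ b₂ a₃ b₃ : A,
      F a₁ b₁ → F a₂ b₂ → F a₃ b₃ → F (Q a₁ a₂ a₃) (Q b₁ b₂ b₃))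
    (habs : ∀ i, 1 ≤ i → i ≤ m → ∀ a₁ b₁ a₂ b₂ a₃ b₃ : A,
      E a₁ b₁ → F a₂ b₂ → E a₃ b₃ → E (D i a₁ a₂ a₃) (D i b₁ b₂ b₃)) :
    ∀ a b : A, F a b → ∃ c : A, F b c ∧ Relation.TransGen E a c := by
  intro a b hab
  refine ⟨Q a b b, ?_, ?_⟩
  · have := hFcompQ a a a b b b (hFrefl a) hab (hFrefl b)
    rwa [hQ] at this
  · have key : ∀ i, 1 ≤ i → i ≤ m → Relation.TransGen E a (D i a b b) := by
      intro i h1 h2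
      induction i with
      | zero => omega
      | succ n ih =>
        rcases Nat.eq_or_lt_of_le h1 with h | h
        · have step : E (D 1 a a b) (D 1 a b b) :=
            habs 1 le_rfl (by omega) a a a b b b (hErefl a) hab (hErefl b)
          rw [hD1] at step
          rw [← h]
          exact Relation.TransGen.single step
        · have hn1 : 1 ≤ n := by omega
          have hnm : n < m := by omega
          have prev := ih hn1 (by omega)
          rw [hDlink n hn1 hnm] at prev
          have step : E (D (n+1) a a b) (D (n+1) a b b) :=
            habs (n+1) (by omega) h2 a a a b b b (hErefl a) hab (hErefl b)
          exact prev.tail step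
    have := key m hm le_rfl
    rwa [hDm] at this
end

section
/- Let F₂ be an algebra with two distinguished elements x, z, let → and ⇢ be reflexive transitive binary relations on F₂ with → ⊆ ⇢, compatible with ternary operations J_1,...,J_{2k+1} satisfying the weak Jónsson equations, such that → middle-absorbs ⇢ with respect to each J_i. Suppose B(c;b,d) is a (k+1)-box: elements q_1,...,q_{k+1}, p_1,...,p_{k+1} with q_1 = c, q_1 ⇢ p_1 ⇢ q_2 ⇢ p_2 ⇢ ... ⇢ q_{k+1} ⇢ p_{k+1}, q_1 → q_2 → ... → q_{k+1} → b, and p_1 → p_2 → ... → p_{k+1} → d. Then c → J_{2k+1}(b,d,d). -/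
/-- Box lemma: a (k+1)-box B(c;b,d) yields c → J_{2k+1}(b,d,d). -/
theorem box_lemma {A : Type*} (k : ℕ)
    (J : ℕ → A → A → A → A)
    (hJ1 : ∀ x y : A, J 1 x x y = x)
    (hJodd : ∀ i : ℕ, i ≤ k - 1 →
      ∀ x y : A, J (2 * i + 1) x y y = J (2 * i + 2) x y y)
    (hJeven : ∀ i : ℕ, 1 ≤ i → i ≤ k →
      ∀ x y : A, J (2 * i) x x y = J (2 * i + 1) x x y)
    (r s : A → A → Prop)
    (hrrefl : ∀ a, r a a) (hrtrans : Transitive r)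
    (hsrefl : ∀ a, s a a) (hstrans : Transitive s)
    (hrs : ∀ a b, r a b → s a b)
    (habs : ∀ i, 1 ≤ i → i ≤ 2 * k + 1 → ∀ a₁ b₁ a₂ b₂ a₃ b₃ : A,
      r a₁ b₁ → s a₂ b₂ → r a₃ b₃ → r (J i a₁ a₂ a₃) (J i b₁ b₂ b₃))
    (c b d : A) (q p : ℕ → A)
    (hq1 : q 1 = c)
    (hqp : ∀ i, 1 ≤ i → i ≤ k + 1 → s (q i) (p i))
    (hpq : ∀ i, 1 ≤ i → i ≤ k → s (p i) (q (i + 1)))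
    (hqq : ∀ i, 1 ≤ i → i ≤ k → r (q i) (q (i + 1)))
    (hpp : ∀ i, 1 ≤ i → i ≤ k → r (p i) (p (i + 1)))
    (hqb : r (q (k + 1)) b)
    (hpd : r (p (k + 1)) d) :
    r c (J (2 * k + 1) b d d) := by
  have key : ∀ n, n ≤ k → r c (J (2 * n + 1) (q (n + 1)) (p (n + 1)) (p (n + 1))) := by
    intro n
    induction n with
    | zero =>
      intro _
      have h0 : c = J 1 (q 1) (q 1) (p 1) := by rw [hJ1, hq1]
      rw [h0]
      exact habs 1 (by omega) (by omega) _ _ _ _ _ _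
        (hrrefl _) (hqp 1 (by omega) (by omega)) (hrrefl _)
    | succ n ih =>
      intro hn
      have h1 := ih (by omega)
      have heq1 : J (2 * n + 1) (q (n + 1)) (p (n + 1)) (p (n + 1))
          = J (2 * n + 2) (q (n + 1)) (p (n + 1)) (p (n + 1)) := hJodd n (by omega) _ _
      rw [heq1] at h1
      have h2 : r (J (2 * n + 2) (q (n + 1)) (p (n + 1)) (p (n + 1)))
          (J (2 * n + 2) (q (n + 2)) (q (n + 2)) (p (n + 2))) :=
        habs (2 * n + 2) (by omega) (by omega) _ _ _ _ _ _
          (hqq (n + 1) (by omega) (by omega)) (hpq (n + 1) (by omega) (by omega))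
          (hpp (n + 1) (by omega) (by omega))
      have h12 := hrtrans h1 h2
      have heq2 : J (2 * n + 2) (q (n + 2)) (q (n + 2)) (p (n + 2))
          = J (2 * n + 3) (q (n + 2)) (q (n + 2)) (p (n + 2)) :=
        hJeven (n + 1) (by omega) (by omega) _ _
      rw [heq2] at h12
      have h3 : r (J (2 * n + 3) (q (n + 2)) (q (n + 2)) (p (n + 2)))
          (J (2 * n + 3) (q (n + 2)) (p (n + 2)) (p (n + 2))) :=
        habs (2 * n + 3) (by omega) (by omega) _ _ _ _ _ _
          (hrrefl _) (hqp (n + 2) (by omega) (by omega)) (hrrefl _)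
      exact hrtrans h12 h3
  have hkey := key k le_rfl
  have hfin : r (J (2 * k + 1) (q (k + 1)) (p (k + 1)) (p (k + 1))) (J (2 * k + 1) b d d) :=
    habs (2 * k + 1) (by omega) (by omega) _ _ _ _ _ _ hqb (hrs _ _ hpd) hpd
  exact hrtrans hkey hfin
end

section
/- Let A be an algebra with idempotent weak Jónsson operations J_1,...,J_{2n+1}, and let → be a preorder on A compatible with all J_i such that → middle-absorbs a reflexive compatible relation ⇢ containing →, with respect to each J_i. If q ⇢ p and p ⇢ q, then q → p. -/
/-- If q ⇢ p and p ⇢ q then absorption along a weak Jónsson chain gives q → p. -/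
theorem dashed_cycle_implies_arrow {A : Type*} (n : ℕ)
    (J : ℕ → A → A → A → A)
    (hidem : ∀ i, 1 ≤ i → i ≤ 2 * n + 1 → ∀ x : A, J i x x x = x)
    (hJ1 : ∀ x y : A, J 1 x x y = x)
    (hJtop : ∀ x y : A, J (2 * n + 1) x y y = y)
    (hJodd : ∀ i : ℕ, i ≤ n - 1 →
      ∀ x y : A, J (2 * i + 1) x y y = J (2 * i + 2) x y y)
    (hJeven : ∀ i : ℕ, 1 ≤ i → i ≤ n →
      ∀ x y : A, J (2 * i) x x y = J (2 * i + 1) x x y)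
    (r s : A → A → Prop)
    (hrrefl : ∀ a, r a a) (hrtrans : Transitive r)
    (hsrefl : ∀ a, s a a)
    (hrs : ∀ a b, r a b → s a b)
    (habs : ∀ i, 1 ≤ i → i ≤ 2 * n + 1 → ∀ a₁ b₁ a₂ b₂ a₃ b₃ : A,
      r a₁ b₁ → s a₂ b₂ → r a₃ b₃ → r (J i a₁ a₂ a₃) (J i b₁ b₂ b₃)) :
    ∀ q p : A, s q p → s p q → r q p := by
  intro q p hqp hpq
  have key : ∀ i, i ≤ n → r q (J (2 * i + 1) q q p) := by
    intro i hi
    induction i with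
    | zero => rw [show 2 * 0 + 1 = 1 by rfl, hJ1]; exact hrrefl q
    | succ k ih =>
      have hk : k ≤ n := by omega
      have h1 : r q (J (2 * k + 1) q q p) := ih hk
      have h2 : r (J (2 * k + 1) q q p) (J (2 * k + 1) q p p) :=
        habs (2 * k + 1) (by omega) (by omega) _ _ _ _ _ _ (hrrefl q) hqp (hrrefl p)
      have e1 : J (2 * k + 1) q p p = J (2 * k + 2) q p p := hJodd k (by omega) q p
      have h3 : r (J (2 * k + 2) q p p) (J (2 * k + 2) q q p) :=
        habs (2 * k + 2) (by omega) (by omega) _ _ _ _ _ _ (hrrefl q) hpq (hrrefl p)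
      have e2 : J (2 * (k + 1)) q q p = J (2 * (k + 1) + 1) q q p :=
        hJeven (k + 1) (by omega) (by omega) q p
      have : r q (J (2 * k + 2) q q p) :=
        hrtrans (hrtrans h1 h2) (e1 ▸ h3)
      rw [show 2 * (k + 1) + 1 = 2 * (k+1) + 1 by rfl, ← e2]
      exact this
  have h1 : r q (J (2 * n + 1) q q p) := key n le_rfl
  have h2 : r (J (2 * n + 1) q q p) (J (2 * n + 1) q p p) :=
    habs (2 * n + 1) (by omega) (by omega) _ _ _ _ _ _ (hrrefl q) hqp (hrrefl p)
  rw [hJtop] at h2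
  exact hrtrans h1 h2
end

section
/- Let F₂ be the free algebra on generators x, z in a variety, and let σ be the endomorphism of F₂ determined by σ(x) = a, σ(z) = b. Let F be a subalgebra of F₂² containing (x,x),(x,z),(z,z), and let ⇢ be the transitive closure of F. If a ⇢ b (σ is 'special'), then σ preserves ⇢: for all c, d ∈ F₂, c ⇢ d implies σ(c) ⇢ σ(d). -/
/-- The subalgebra of A² generated by a set S of pairs, where A carries
    ternary operations indexed by ι. -/
inductive SubalgGen {A : Type*} {ι : Type*} (ops : ι → A → A → A → A)
    (S : Set (A × A)) : A → A → Prop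
  | base : ∀ p ∈ S, SubalgGen ops S p.1 p.2
  | app : ∀ (i : ι) (a₁ b₁ a₂ b₂ a₃ b₃ : A), SubalgGen ops S a₁ b₁ →
      SubalgGen ops S a₂ b₂ → SubalgGen ops S a₃ b₃ →
      SubalgGen ops S (ops i a₁ a₂ a₃) (ops i b₁ b₂ b₃)

section Aux

variable {A : Type*} {ι : Type*} (ops : ι → A → A → A → A) (S : Set (A × A))

private lemma transGen_ops_congr
    (hrefl : ∀ c : A, SubalgGen ops S c c) (i : ι) {u₁ v₁ u₂ v₂ u₃ v₃ : A}
    (h₁ : Relation.TransGen (SubalgGen ops S) u₁ v₁)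
    (h₂ : Relation.TransGen (SubalgGen ops S) u₂ v₂)
    (h₃ : Relation.TransGen (SubalgGen ops S) u₃ v₃) :
    Relation.TransGen (SubalgGen ops S) (ops i u₁ u₂ u₃) (ops i v₁ v₂ v₃) := by
  have m1 : ∀ p q : A, Relation.TransGen (SubalgGen ops S) (ops i u₁ p q) (ops i v₁ p q) := by
    intro p q
    induction h₁ with
    | single h => exact .single (.app i _ _ _ _ _ _ h (hrefl p) (hrefl q))
    | tail _ h ih => exact ih.tail (.app i _ _ _ _ _ _ h (hrefl p) (hrefl q))
  have m2 : ∀ q : A, Relation.TransGen (SubalgGen ops S) (ops i v₁ u₂ q) (ops i v₁ v₂ q) := by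
    intro q
    induction h₂ with
    | single h => exact .single (.app i _ _ _ _ _ _ (hrefl v₁) h (hrefl q))
    | tail _ h ih => exact ih.tail (.app i _ _ _ _ _ _ (hrefl v₁) h (hrefl q))
  have m3 : Relation.TransGen (SubalgGen ops S) (ops i v₁ v₂ u₃) (ops i v₁ v₂ v₃) := by
    induction h₃ with
    | single h => exact .single (.app i _ _ _ _ _ _ (hrefl v₁) (hrefl v₂) h)
    | tail _ h ih => exact ih.tail (.app i _ _ _ _ _ _ (hrefl v₁) (hrefl v₂) h)
  exact ((m1 u₂ u₃).trans (m2 u₃)).trans m3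

end Aux

/-- A special endomorphism (σ x = a, σ z = b with a ⇢ b) preserves the
    preorder ⇢, the transitive closure of the subalgebra F of F₂² generated by
    (x,x), (x,z), (z,z). -/
theorem special_endomorphism_preserves {A : Type*} {ι : Type*}
    (ops : ι → A → A → A → A) (x z : A) (σ : A → A)
    (hσop : ∀ (i : ι) (u v w : A), σ (ops i u v w) = ops i (σ u) (σ v) (σ w))
    (a b : A) (hσx : σ x = a) (hσz : σ z = b)
    (hrefl : ∀ c : A, SubalgGen ops {(x, x), (x, z), (z, z)} c c)
    (hspecial : Relation.TransGen (SubalgGen ops {(x, x), (x, z), (z, z)}) a b) :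
    ∀ c d : A, Relation.TransGen (SubalgGen ops {(x, x), (x, z), (z, z)}) c d →
      Relation.TransGen (SubalgGen ops {(x, x), (x, z), (z, z)}) (σ c) (σ d) := by
  have key : ∀ c d : A, SubalgGen ops {(x, x), (x, z), (z, z)} c d →
      Relation.TransGen (SubalgGen ops {(x, x), (x, z), (z, z)}) (σ c) (σ d) := by
    intro c d h
    induction h with
    | base p hp =>
      rcases hp with hp | hp | hp <;> subst hp <;> simp only [hσx, hσz]
      · exact .single (hrefl a)
      · exact hspecial
      · exact .single (hrefl b)
    | app i a₁ b₁ a₂ b₂ a₃ b₃ _ _ _ ih₁ ih₂ ih₃ =>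
      rw [hσop, hσop]
      exact transGen_ops_congr ops _ hrefl i ih₁ ih₂ ih₃
  intro c d h
  induction h with
  | single h => exact key _ _ h
  | tail _ h ih => exact ih.trans (key _ _ h)
end

section
/- Let A be an algebra with idempotent weak Jónsson operations J_1,...,J_{2k+1}, let → and ⇢ be admissible preorders on A with → ⊆ ⇢ and → middle-absorbing ⇢ with respect to each J_i, and suppose there is a 1-fence x → b, a → b, a → d together with x ⇢ a (where b, a, d arise as binary term functions and substitution c(x,z) ↦ c(u,v) preserves → and ⇢ for special substitutions u ⇢ v). Then for every ℓ > 1 there is an ℓ-box from x to b and d(b,d): elements q_1,...,q_ℓ,p_1,...,p_ℓ with q_1 = x, q_i ⇢ p_i ⇢ q_{i+1}, q_1 → q_2 → ... → q_ℓ → b, and p_1 → ... → p_ℓ → d(b,d). -/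
/-- Fence-to-box lemma: from a 1-fence x → b ← a → d (in the free algebra on
    x, z, modeled via a substitution operation `sub`), for every ℓ > 1 there is
    an ℓ-box from x to b and d(b,d). -/
theorem fence_to_box {A : Type*} (k : ℕ)
    (J : ℕ → A → A → A → A)
    (hJ1 : ∀ x y : A, J 1 x x y = x)
    (hJodd : ∀ i : ℕ, i ≤ k - 1 →
      ∀ x y : A, J (2 * i + 1) x y y = J (2 * i + 2) x y y)
    (hJeven : ∀ i : ℕ, 1 ≤ i → i ≤ k →
      ∀ x y : A, J (2 * i) x x y = J (2 * i + 1) x x y)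
    (r s : A → A → Prop)
    (hrrefl : ∀ a, r a a) (hrtrans : Transitive r)
    (hsrefl : ∀ a, s a a) (hstrans : Transitive s)
    (hrs : ∀ a b, r a b → s a b)
    (habs : ∀ i, 1 ≤ i → i ≤ 2 * k + 1 → ∀ a₁ b₁ a₂ b₂ a₃ b₃ : A,
      r a₁ b₁ → s a₂ b₂ → r a₃ b₃ → r (J i a₁ a₂ a₃) (J i b₁ b₂ b₃))
    -- the substitution operation c(u,v) of the free algebra F₂ on x, z
    (x z : A) (sub : A → A → A → A)
    (hsubx : ∀ u v : A, sub x u v = u)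
    (hsubz : ∀ u v : A, sub z u v = v)
    (hsubidem : ∀ c u : A, sub c u u = u)
    -- special substitutions (u ⇢ v) preserve → and ⇢ (Lemma 1)
    (hpres_r : ∀ u v : A, s u v → ∀ c d : A, r c d → r (sub c u v) (sub d u v))
    (hpres_s : ∀ u v : A, s u v → ∀ c d : A, s c d → s (sub c u v) (sub d u v))
    -- term functions c(·,·) are compatible with → and ⇢
    (hmono_r : ∀ c u u' v v' : A, r u u' → r v v' → r (sub c u v) (sub c u' v'))
    (hmono_s : ∀ c u u' v v' : A, s u u' → s v v' → s (sub c u v) (sub c u' v'))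
    -- the 1-fence x → b ← a → d, with x ⇢ a
    (a b d : A) (hxb : r x b) (hab : r a b) (had : r a d) (hxa : s x a) :
    ∀ l : ℕ, 1 < l →
      ∃ q p : ℕ → A, q 1 = x ∧
        (∀ i, 1 ≤ i → i ≤ l → s (q i) (p i)) ∧
        (∀ i, 1 ≤ i → i < l → s (p i) (q (i + 1))) ∧
        (∀ i, 1 ≤ i → i < l → r (q i) (q (i + 1)) ∧ r (p i) (p (i + 1))) ∧
        r (q l) b ∧ r (p l) (sub d b d) := by
  intro l hl
  -- f n = q (n+1):  f 0 = x,  f (n+1) = b(f n, a)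
  set f : ℕ → A := fun n => Nat.rec x (fun _ fn => sub b fn a) n with hf
  have hf0 : f 0 = x := rfl
  have hfS : ∀ n, f (n + 1) = sub b (f n) a := fun n => rfl
  have hfa : ∀ n, s (f n) a := by
    intro n
    induction n with
    | zero => exact hxa
    | succ n ih =>
      rw [hfS]
      have := hmono_s b (f n) a a a ih (hsrefl a)
      rwa [hsubidem b a] at this
  have hfb : ∀ n, r (f n) b := by
    intro n
    induction n with
    | zero => exact hxb
    | succ n ih =>
      rw [hfS]
      have := hmono_r b (f n) b a b ih hab
      rwa [hsubidem b b] at this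
  refine ⟨fun i => f (i - 1), fun i => sub a (f (i - 1)) a, rfl, ?_, ?_, ?_, ?_, ?_⟩
  · intro i _ _
    have := hpres_s (f (i - 1)) a (hfa _) x a hxa
    rwa [hsubx] at this
  · intro i hi _
    have hstep : s (sub a (f (i - 1)) a) (sub b (f (i - 1)) a) :=
      hpres_s (f (i - 1)) a (hfa _) a b (hrs a b hab)
    have he : i + 1 - 1 = (i - 1) + 1 := by omega
    show s (sub a (f (i - 1)) a) (f (i + 1 - 1))
    rw [he, hfS]
    exact hstep
  · intro i hi _
    have hstep : r (f (i - 1)) (sub b (f (i - 1)) a) := by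
      have := hpres_r (f (i - 1)) a (hfa _) x b hxb
      rwa [hsubx] at this
    have he : i + 1 - 1 = (i - 1) + 1 := by omega
    constructor
    · show r (f (i - 1)) (f (i + 1 - 1))
      rw [he, hfS]; exact hstep
    · show r (sub a (f (i - 1)) a) (sub a (f (i + 1 - 1)) a)
      rw [he, hfS]
      exact hmono_r a (f (i - 1)) (sub b (f (i - 1)) a) a a hstep (hrrefl a)
  · exact hfb _
  · have h1 : r (sub a (f (l - 1)) a) (sub d (f (l - 1)) a) :=
      hpres_r (f (l - 1)) a (hfa _) a d had
    have h2 : r (sub d (f (l - 1)) a) (sub d b d) :=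
      hmono_r d (f (l - 1)) b a d (hfb _) had
    exact hrtrans h1 h2
end
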